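/- arXiv:2602.16109 — 2 statements merged into one kernel-verified Lean document; each statement's English description precedes it below -/
import Mathlib

section
/- Theorem 1 (Convergence of FedGraph-AGI, precise inexact-gradient form): Let E be a real inner product space and f : E → ℝ differentiable with an L-Lipschitz gradient (L > 0), and suppose f is μ-strongly convex in the first-order sense with 0 < μ ≤ L and global minimizer θ*. Let 0 < η ≤ 1/L, and let the iterates satisfy θ_{t+1} = θ_t − η·g_t where each inexact gradient g_t satisfies ‖g_t − ∇f(θ_t)‖² ≤ G² + Δ². Then for every T, f(θ_T) − f(θ*) ≤ (1 − μη)^T · (f(θ_0) − f(θ*)) + (G² + Δ²)/(2μ). -/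
open scoped RealInnerProductSpace

section Aux

variable {E : Type*} [NormedAddCommGroup E] [InnerProductSpace ℝ E] [CompleteSpace E]

lemma descent_lemma (f : E → ℝ) (f' : E → E) (L : ℝ)
    (hdiff : ∀ x, HasGradientAt f (f' x) x)
    (hlip : ∀ x y, ‖f' x - f' y‖ ≤ L * ‖x - y‖) (x y : E) :
    f y ≤ f x + ⟪f' x, y - x⟫ + L / 2 * ‖y - x‖ ^ 2 := by
  set v := y - x with hv
  have hF : ∀ t : ℝ, HasDerivAt (fun s : ℝ => f (x + s • v)) ⟪f' (x + t • v), v⟫ t := by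
    intro t
    have h1 : HasDerivAt (fun s : ℝ => x + s • v) v t := by
      simpa using ((hasDerivAt_id t).smul_const v).const_add x
    have h2 := (hdiff (x + t • v)).hasFDerivAt.comp_hasDerivAt t h1
    simpa [InnerProductSpace.toDual_apply_apply, real_inner_comm, Function.comp_def] using h2
  have hB : ∀ t : ℝ, HasDerivAt
      (fun s : ℝ => f x + s * ⟪f' x, v⟫ + L / 2 * s ^ 2 * ‖v‖ ^ 2)
      (⟪f' x, v⟫ + L * t * ‖v‖ ^ 2) t := by
    intro t
    have : HasDerivAt (fun s : ℝ => f x + s * ⟪f' x, v⟫ + L / 2 * s ^ 2 * ‖v‖ ^ 2)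
        (1 * ⟪f' x, v⟫ + L / 2 * (2 * t ^ 1) * ‖v‖ ^ 2) t := by
      exact (((hasDerivAt_id t).mul_const _).const_add _).add
        ((((hasDerivAt_pow 2 t).const_mul (L / 2)).mul_const (‖v‖ ^ 2)))
    convert this using 1; ring
  have key := image_le_of_deriv_right_le_deriv_boundary
    (f := fun s : ℝ => f (x + s • v)) (f' := fun t => ⟪f' (x + t • v), v⟫)
    (a := 0) (b := 1)
    (fun t _ => (hF t).continuousAt.continuousWithinAt)
    (fun t _ => (hF t).hasDerivWithinAt)
    (B := fun s : ℝ => f x + s * ⟪f' x, v⟫ + L / 2 * s ^ 2 * ‖v‖ ^ 2)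
    (B' := fun t => ⟪f' x, v⟫ + L * t * ‖v‖ ^ 2)
    (by simp) (fun t _ => (hB t).continuousAt.continuousWithinAt)
    (fun t _ => (hB t).hasDerivWithinAt) ?_ (Set.right_mem_Icc.2 zero_le_one)
  · have hxy : x + v = y := by rw [hv]; abel
    simp only [one_smul, one_pow, one_mul, mul_one] at key
    rw [hxy] at key; linarith
  · intro t ht
    have h1 : ⟪f' (x + t • v) - f' x, v⟫ ≤ ‖f' (x + t • v) - f' x‖ * ‖v‖ :=
      real_inner_le_norm _ _
    have h2 : ‖f' (x + t • v) - f' x‖ ≤ L * (t * ‖v‖) := by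
      have := hlip (x + t • v) x
      simpa [norm_smul, abs_of_nonneg ht.1] using this
    have hv0 : (0:ℝ) ≤ ‖v‖ := norm_nonneg _
    have := mul_le_mul_of_nonneg_right h2 hv0
    have hsplit : ⟪f' (x + t • v), v⟫ = ⟪f' x, v⟫ + ⟪f' (x + t • v) - f' x, v⟫ := by
      rw [inner_sub_left]; ring
    rw [hsplit]
    nlinarith [h1, this]

lemma pl_ineq (f : E → ℝ) (f' : E → E) (μ : ℝ) (hμ : 0 < μ)
    (hsc : ∀ x y, f x + ⟪f' x, y - x⟫ + (μ / 2) * ‖y - x‖ ^ 2 ≤ f y)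
    (θs : E) (x : E) :
    2 * μ * (f x - f θs) ≤ ‖f' x‖ ^ 2 := by
  have h := hsc x θs
  set d := θs - x with hd
  have hsq : (0:ℝ) ≤ ‖μ • d + f' x‖ ^ 2 := sq_nonneg _
  rw [norm_add_sq_real, norm_smul, real_inner_smul_left, Real.norm_eq_abs, mul_pow, sq_abs] at hsq
  have hinner : ⟪f' x, d⟫ = ⟪d, f' x⟫ := real_inner_comm _ _
  nlinarith [hsq, h, hμ, mul_pos hμ hμ]

end Aux

/-- Theorem 1 (Convergence of FedGraph-AGI, inexact-gradient form): for `f` with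
`L`-Lipschitz gradient, `μ`-strongly convex (`0 < μ ≤ L`) with global minimizer `θs`,
step size `0 < η ≤ 1/L`, and iterates `θ (t+1) = θ t - η • g t` with inexact gradients
satisfying `‖g t - ∇f (θ t)‖² ≤ G² + Δ²`, one has
`f (θ T) - f θs ≤ (1 - μη)^T (f (θ 0) - f θs) + (G² + Δ²) / (2μ)`. -/
theorem fedgraph_agi_convergence {E : Type*} [NormedAddCommGroup E]
    [InnerProductSpace ℝ E] [CompleteSpace E] (f : E → ℝ) (f' : E → E)
    (L μ G Δ : ℝ) (hL : 0 < L) (hμ : 0 < μ) (hμL : μ ≤ L)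
    (hdiff : ∀ x, HasGradientAt f (f' x) x)
    (hlip : ∀ x y, ‖f' x - f' y‖ ≤ L * ‖x - y‖)
    (hsc : ∀ x y, f x + ⟪f' x, y - x⟫ + (μ / 2) * ‖y - x‖ ^ 2 ≤ f y)
    (θs : E) (hmin : ∀ x, f θs ≤ f x)
    (η : ℝ) (hη0 : 0 < η) (hη : η ≤ 1 / L)
    (θ : ℕ → E) (g : ℕ → E)
    (hiter : ∀ t, θ (t + 1) = θ t - η • g t)
    (hnoise : ∀ t, ‖g t - f' (θ t)‖ ^ 2 ≤ G ^ 2 + Δ ^ 2) :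
    ∀ T, f (θ T) - f θs ≤
      (1 - μ * η) ^ T * (f (θ 0) - f θs) + (G ^ 2 + Δ ^ 2) / (2 * μ) := by
  set N := G ^ 2 + Δ ^ 2 with hN
  have hN0 : 0 ≤ N := le_trans (sq_nonneg _) (hnoise 0)
  have hLη : L * η ≤ 1 := by
    have := mul_le_mul_of_nonneg_left hη hL.le
    rwa [mul_one_div, div_self hL.ne'] at this
  have hq : 0 ≤ 1 - μ * η := by nlinarith [mul_le_mul_of_nonneg_right hμL hη0.le]
  have step : ∀ t, f (θ (t + 1)) - f θs ≤
      (1 - μ * η) * (f (θ t) - f θs) + η / 2 * N := by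
    intro t
    have hd := descent_lemma f f' L hdiff hlip (θ t) (θ (t + 1))
    have hst : θ (t + 1) - θ t = -(η • g t) := by rw [hiter t]; abel
    rw [hst, inner_neg_right, real_inner_smul_right, norm_neg, norm_smul,
      Real.norm_eq_abs, abs_of_nonneg hη0.le, mul_pow] at hd
    have h1 : ‖g t - f' (θ t)‖ ^ 2
        = ‖g t‖ ^ 2 - 2 * ⟪f' (θ t), g t⟫ + ‖f' (θ t)‖ ^ 2 := by
      rw [norm_sub_sq_real, real_inner_comm]
    have h2 := hnoise t
    have h3 := pl_ineq f f' μ hμ hsc θs (θ t)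
    nlinarith [mul_nonneg (mul_nonneg (sub_nonneg.2 hLη) hη0.le)
        (sq_nonneg ‖g t‖),
      mul_le_mul_of_nonneg_left h2 (by positivity : (0:ℝ) ≤ η / 2),
      mul_le_mul_of_nonneg_left h3 (by positivity : (0:ℝ) ≤ η / 2)]
  intro T
  induction T with
  | zero =>
    have : (0:ℝ) ≤ N / (2 * μ) := by positivity
    simp only [pow_zero, one_mul]
    linarith
  | succ T ih =>
    have hmul := mul_le_mul_of_nonneg_left ih hq
    have hfs : μ * η * (N / (2 * μ)) = η / 2 * N := by
      field_simp
    have hpow : (1 - μ * η) ^ (T + 1) = (1 - μ * η) ^ T * (1 - μ * η) := pow_succ _ _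
    have hx : (1 - μ * η) * ((1 - μ * η) ^ T * (f (θ 0) - f θs) + N / (2 * μ))
        = (1 - μ * η) ^ (T + 1) * (f (θ 0) - f θs) + N / (2 * μ)
          - μ * η * (N / (2 * μ)) := by rw [hpow]; ring
    have := step T
    linarith
end

section
/- Gaussian mechanism large-privacy-loss event (per-round claim underlying Theorem 2): Let 0 < ε ≤ 1, 0 < δ < 1, S > 0, and set σ = (S/ε)·√(2·log(1.25/δ)). Let μ₀, μ₁ ∈ ℝ with |μ₀ − μ₁| ≤ S. Then the Gaussian measure gaussianReal μ₀ σ² assigns measure at most δ to the set { x ∈ ℝ : gaussianPDFReal μ₀ σ² x > exp(ε) · gaussianPDFReal μ₁ σ² x }. -/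
open Real ProbabilityTheory
open MeasureTheory Set Filter
open scoped NNReal ENNReal
set_option maxHeartbeats 1000000

lemma num_sqrt2pi : (2.5066 : ℝ) ≤ Real.sqrt (2*π) := by
  rw [show (2.5066:ℝ) = Real.sqrt (2.5066^2) by rw [Real.sqrt_sq]; norm_num]
  apply Real.sqrt_le_sqrt
  nlinarith [Real.pi_gt_d6]

lemma num_exp_half : Real.exp (1/2) ≤ 1.6488 := by
  have h : Real.exp (1/2) ^ 2 ≤ 1.6488 ^ 2 := by
    rw [← Real.exp_nat_mul]
    push_cast
    norm_num
    nlinarith [Real.exp_one_lt_d9]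
  nlinarith [Real.exp_pos (1/2:ℝ)]

lemma num_log_125 : (0.22 : ℝ) ≤ Real.log 1.25 := by
  have h : Real.exp 0.22 ≤ 1.25 := by
    have he11 : Real.exp 1 ^ 11 ≤ 1.25 ^ 50 := by
      calc Real.exp 1 ^ 11 ≤ 2.7182818286 ^ 11 :=
            pow_le_pow_left₀ (Real.exp_pos 1).le Real.exp_one_lt_d9.le _
        _ ≤ 1.25 ^ 50 := by norm_num
    have h50 : Real.exp 0.22 ^ 50 ≤ 1.25 ^ 50 := by
      rw [← Real.exp_nat_mul]
      rw [show ((50:ℕ):ℝ) * 0.22 = 11 by norm_num]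
      rw [show (11:ℝ) = ((11:ℕ):ℝ) * 1 by norm_num, Real.exp_nat_mul]
      exact he11
    exact le_of_pow_le_pow_left₀ (by norm_num) (by norm_num) h50
  calc (0.22:ℝ) = Real.log (Real.exp 0.22) := (Real.log_exp _).symm
    _ ≤ Real.log 1.25 := Real.log_le_log (Real.exp_pos _) h

lemma gauss_antideriv {μ σ : ℝ} (hσ : 0 < σ) (x : ℝ) :
    HasDerivAt (fun y => -σ^2 * Real.exp (-(y-μ)^2/(2*σ^2)))
      ((x-μ) * Real.exp (-(x-μ)^2/(2*σ^2))) x := by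
  have hu : HasDerivAt (fun y : ℝ => -(y-μ)^2/(2*σ^2)) (-(x-μ)/σ^2) x := by
    have h1 : HasDerivAt (fun y : ℝ => (y-μ)) 1 x := (hasDerivAt_id x).sub_const μ
    have h2 : HasDerivAt (fun y : ℝ => (y-μ)^2) (2*(x-μ)) x := by
      have := h1.fun_pow 2
      simpa [mul_comm] using this
    have h3 := h2.neg.div_const (2*σ^2)
    refine h3.congr_deriv ?_
    field_simp
  have he := (Real.hasDerivAt_exp _).comp x hu
  have := he.const_mul (-σ^2)
  refine this.congr_deriv ?_
  field_simp

lemma gauss_tendsto {μ σ : ℝ} (hσ : 0 < σ) :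
    Tendsto (fun y => -σ^2 * Real.exp (-(y-μ)^2/(2*σ^2))) atTop (nhds 0) := by
  have h1 : Tendsto (fun y : ℝ => -(y-μ)^2/(2*σ^2)) atTop atBot := by
    apply Tendsto.atBot_div_const (by positivity)
    apply tendsto_neg_atBot_iff.mpr
    have hb : Tendsto (fun y : ℝ => y - μ) atTop atTop :=
      tendsto_atTop_add_const_right _ _ tendsto_id
    exact hb.atTop_mul_atTop₀ hb |>.congr (by intro y; ring)
  have h2 := Real.tendsto_exp_atBot.comp h1
  have := h2.const_mul (-σ^2)
  simpa using this

lemma mills_bound (μ σ t : ℝ) (hσ : 0 < σ) (ht : 0 < t) :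
    ∫ x in Ioi (μ + σ*t), gaussianPDFReal μ (σ^2).toNNReal x
      ≤ Real.exp (-t^2/2) / (t * Real.sqrt (2*π)) := by
  have hcoe : (((σ^2).toNNReal : ℝ≥0) : ℝ) = σ^2 := Real.coe_toNNReal _ (sq_nonneg σ)
  set b := μ + σ*t with hb
  set g : ℝ → ℝ := fun x => (x-μ) * Real.exp (-(x-μ)^2/(2*σ^2)) with hg
  have hderiv : ∀ x ∈ Ioi b, HasDerivAt (fun y => -σ^2 * Real.exp (-(y-μ)^2/(2*σ^2))) (g x) x :=
    fun x _ => gauss_antideriv hσ x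
  have hgnn : ∀ x ∈ Ioi b, 0 ≤ g x := by
    intro x hx
    have : 0 < x - μ := by simp only [mem_Ioi, hb] at hx; nlinarith
    positivity
  have hcont : ContinuousWithinAt (fun y => -σ^2 * Real.exp (-(y-μ)^2/(2*σ^2))) (Ici b) b :=
    ((gauss_antideriv hσ b).continuousAt).continuousWithinAt
  have hint : IntegrableOn g (Ioi b) :=
    integrableOn_Ioi_deriv_of_nonneg hcont hderiv hgnn (gauss_tendsto hσ)
  have hval : ∫ x in Ioi b, g x = σ^2 * Real.exp (-t^2/2) := by
    rw [integral_Ioi_of_hasDerivAt_of_tendsto hcont hderiv hint (gauss_tendsto hσ)]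
    have : (b - μ)^2 = σ^2 * t^2 := by rw [hb]; ring
    rw [zero_sub]
    rw [show -(b-μ)^2/(2*σ^2) = -t^2/2 by rw [this]; field_simp]
    ring
  have hpdf : ∀ x, gaussianPDFReal μ (σ^2).toNNReal x
      = (σ * Real.sqrt (2*π))⁻¹ * Real.exp (-(x-μ)^2/(2*σ^2)) := by
    intro x
    rw [gaussianPDFReal, hcoe]
    congr 2
    rw [show 2*π*σ^2 = (2*π)*σ^2 by ring, Real.sqrt_mul (by positivity), Real.sqrt_sq hσ.le]
    ring
  have hmono : ∫ x in Ioi b, gaussianPDFReal μ (σ^2).toNNReal x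
      ≤ ∫ x in Ioi b, (σ * Real.sqrt (2*π))⁻¹ * (σ*t)⁻¹ * g x := by
    apply setIntegral_mono_on
    · exact (integrable_gaussianPDFReal μ _).integrableOn
    · exact (hint.const_mul _)
    · exact measurableSet_Ioi
    · intro x hx
      rw [hpdf x]
      have hxb : σ * t ≤ x - μ := by simp only [mem_Ioi, hb] at hx; linarith
      have h1 : Real.exp (-(x-μ)^2/(2*σ^2)) ≤ (σ*t)⁻¹ * (x-μ) * Real.exp (-(x-μ)^2/(2*σ^2)) := by
        nlinarith [Real.exp_pos (-(x-μ)^2/(2*σ^2)), mul_pos hσ ht,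
          (inv_pos.mpr (mul_pos hσ ht)),
          mul_le_mul_of_nonneg_left hxb (inv_pos.mpr (mul_pos hσ ht)).le,
          inv_mul_cancel₀ (mul_pos hσ ht).ne']
      calc (σ * Real.sqrt (2*π))⁻¹ * Real.exp (-(x-μ)^2/(2*σ^2))
          ≤ (σ * Real.sqrt (2*π))⁻¹ * ((σ*t)⁻¹ * (x-μ) * Real.exp (-(x-μ)^2/(2*σ^2))) := by
            apply mul_le_mul_of_nonneg_left h1
            positivity
        _ = (σ * Real.sqrt (2*π))⁻¹ * (σ*t)⁻¹ * g x := by rw [hg]; ring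
  calc ∫ x in Ioi b, gaussianPDFReal μ (σ^2).toNNReal x
      ≤ ∫ x in Ioi b, (σ * Real.sqrt (2*π))⁻¹ * (σ*t)⁻¹ * g x := hmono
    _ = (σ * Real.sqrt (2*π))⁻¹ * (σ*t)⁻¹ * (σ^2 * Real.exp (-t^2/2)) := by
        rw [MeasureTheory.integral_const_mul, hval]
    _ = Real.exp (-t^2/2) / (t * Real.sqrt (2*π)) := by
        have hs : Real.sqrt (2*π) > 0 := Real.sqrt_pos.mpr (by positivity)
        field_simp

lemma gauss_reflect (m c : ℝ) (v : ℝ≥0) :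
    gaussianReal m v (Iio c) = gaussianReal (-m) v (Ioi (-c)) := by
  have hmap := gaussianReal_map_const_mul (μ := m) (v := v) (-1)
  have hnn : (NNReal.mk ((-1:ℝ)^2) (sq_nonneg _) * v : ℝ≥0) = v := by
    ext; simp
  rw [hnn] at hmap
  rw [show (-1:ℝ) * m = -m by ring] at hmap
  rw [← hmap, Measure.map_apply (by fun_prop : Measurable fun x : ℝ => (-1:ℝ) * x) measurableSet_Ioi]
  congr 1
  ext x
  simp only [mem_preimage, mem_Ioi, mem_Iio]
  constructor <;> intro h <;> nlinarith

lemma gauss_half (m : ℝ) (v : ℝ≥0) (hv : v ≠ 0) :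
    gaussianReal m v (Ioi m) = 1/2 := by
  set G := gaussianReal m v with hG
  have h1 : G (Iio m) = gaussianReal (-m) v (Ioi (-m)) := gauss_reflect m m v
  have h2 : gaussianReal (-m) v (Ioi (-m)) = G (Ioi m) := by
    have hmap := gaussianReal_map_add_const (μ := -m) (v := v) (2*m)
    rw [show -m + 2*m = m by ring] at hmap
    rw [hG, ← hmap, Measure.map_apply (by fun_prop : Measurable fun x : ℝ => x + 2*m) measurableSet_Ioi]
    congr 1
    ext x
    simp only [mem_preimage, mem_Ioi]
    constructor <;> intro h <;> linarith
  have hsing : G {m} = 0 :=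
    gaussianReal_absolutelyContinuous m hv (by simp)
  have hcompl : G (Iio m) + G (Ici m) = 1 := by
    have := measure_add_measure_compl (μ := G) (s := Iio m) measurableSet_Iio
    rwa [compl_Iio, measure_univ] at this
  have hIci : G (Ici m) = G (Ioi m) := by
    apply le_antisymm
    · calc G (Ici m) = G (insert m (Ioi m)) := by rw [Ioi_insert]
        _ ≤ G {m} + G (Ioi m) := by
            rw [insert_eq]; exact measure_union_le _ _
        _ = G (Ioi m) := by rw [hsing, zero_add]
    · exact measure_mono Ioi_subset_Ici_self
  have hsum : G (Ioi m) + G (Ioi m) = 1 := by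
    rw [h1, h2] at hcompl
    rwa [hIci] at hcompl
  rw [(ENNReal.eq_div_iff (two_ne_zero) (ENNReal.ofNat_ne_top)), two_mul]
  exact hsum

lemma tail_low (μ σ a : ℝ) (hσ : 0 < σ) (ha : 0 ≤ a) :
    gaussianReal μ (σ^2).toNNReal (Ioi (μ - σ*a))
      ≤ ENNReal.ofReal (a / Real.sqrt (2*π)) + 1/2 := by
  have hcoe : (((σ^2).toNNReal : ℝ≥0) : ℝ) = σ^2 := Real.coe_toNNReal _ (sq_nonneg σ)
  have hv : (σ^2).toNNReal ≠ 0 := by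
    simp only [ne_eq, ← NNReal.coe_eq_zero, hcoe]
    positivity
  have hle : μ - σ*a ≤ μ := by nlinarith
  have hsplit : Ioi (μ - σ*a) = Ioc (μ - σ*a) μ ∪ Ioi μ := (Ioc_union_Ioi_eq_Ioi hle).symm
  rw [hsplit]
  calc gaussianReal μ (σ^2).toNNReal (Ioc (μ - σ*a) μ ∪ Ioi μ)
      ≤ gaussianReal μ (σ^2).toNNReal (Ioc (μ - σ*a) μ)
        + gaussianReal μ (σ^2).toNNReal (Ioi μ) := measure_union_le _ _
    _ ≤ ENNReal.ofReal (a / Real.sqrt (2*π)) + 1/2 := by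
        gcongr
        · -- interval bound
          rw [gaussianReal_apply_eq_integral _ hv]
          apply ENNReal.ofReal_le_ofReal
          have hbd : ∀ x ∈ Ioc (μ - σ*a) μ, gaussianPDFReal μ (σ^2).toNNReal x
              ≤ (σ * Real.sqrt (2*π))⁻¹ := by
            intro x _
            rw [gaussianPDFReal, hcoe]
            have h2 : Real.sqrt (2*π*σ^2) = σ * Real.sqrt (2*π) := by
              rw [show 2*π*σ^2 = (2*π)*σ^2 by ring, Real.sqrt_mul (by positivity),
                Real.sqrt_sq hσ.le]
              ring
            rw [h2]
            have : Real.exp (-(x-μ)^2/(2*σ^2)) ≤ 1 := by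
              rw [Real.exp_le_one_iff, neg_div]
              have : 0 ≤ (x-μ)^2/(2*σ^2) := by positivity
              linarith
            nlinarith [inv_pos.mpr (mul_pos hσ (Real.sqrt_pos.mpr (by positivity : (0:ℝ) < 2*π)))]
          calc ∫ x in Ioc (μ - σ*a) μ, gaussianPDFReal μ (σ^2).toNNReal x
              ≤ ∫ _x in Ioc (μ - σ*a) μ, (σ * Real.sqrt (2*π))⁻¹ := by
                apply setIntegral_mono_on
                · exact (integrable_gaussianPDFReal μ _).integrableOn
                · exact integrableOn_const measure_Ioc_lt_top.ne
                · exact measurableSet_Ioc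
                · exact hbd
            _ = (volume (Ioc (μ - σ*a) μ)).toReal * (σ * Real.sqrt (2*π))⁻¹ := by
                rw [setIntegral_const]; rfl
            _ ≤ a / Real.sqrt (2*π) := by
                rw [Real.volume_Ioc, show μ - (μ - σ*a) = σ*a by ring,
                  ENNReal.toReal_ofReal (by positivity)]
                have hs : (0:ℝ) < Real.sqrt (2*π) := Real.sqrt_pos.mpr (by positivity)
                apply le_of_eq
                field_simp
        · rw [gauss_half μ _ hv]

lemma tail_main (μ σ c t ε δ : ℝ) (hε0 : 0 < ε) (hε1 : ε ≤ 1) (hδ0 : 0 < δ) (hδ1 : δ < 1)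
    (hσ : 0 < σ) (hc0 : 0 ≤ c) (hc2 : c^2 = 2 * Real.log (1.25/δ))
    (ht : c - ε/(2*c) ≤ t) :
    gaussianReal μ (σ^2).toNNReal (Ioi (μ + σ*t)) ≤ ENNReal.ofReal δ := by
  have hcoe : (((σ^2).toNNReal : ℝ≥0) : ℝ) = σ^2 := Real.coe_toNNReal _ (sq_nonneg σ)
  have hv : (σ^2).toNNReal ≠ 0 := by
    simp only [ne_eq, ← NNReal.coe_eq_zero, hcoe]; positivity
  have hL0 : (0.22:ℝ) ≤ Real.log (1.25/δ) := by
    calc (0.22:ℝ) ≤ Real.log 1.25 := num_log_125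
      _ ≤ Real.log (1.25/δ) := by
          apply Real.log_le_log (by norm_num)
          rw [le_div_iff₀ hδ0]; nlinarith
  have hcl : (0.6633:ℝ) ≤ c := by nlinarith
  have hcpos : (0:ℝ) < c := by linarith
  have h2c : (0:ℝ) < 2*c := by linarith
  have hdivle : ε/(2*c) ≤ 1/(2*c) := by gcongr
  by_cases hδA : δ ≤ 0.537
  · -- Mills case
    have hL2 : Real.log 2 ≤ Real.log (1.25/δ) := by
      apply Real.log_le_log (by norm_num)
      rw [le_div_iff₀ hδ0]; nlinarith
    have hc2' : (1.3862943606:ℝ) ≤ c^2 := by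
      have := Real.log_two_gt_d9
      nlinarith
    have hc117 : (1.177:ℝ) ≤ c := by nlinarith
    have htlb : (0.75:ℝ) ≤ c - ε/(2*c) := by
      have hd : ε/(2*c) * (2*c) = ε := div_mul_cancel₀ _ h2c.ne'
      nlinarith [div_nonneg hε0.le h2c.le]
    have htpos : (0.75:ℝ) ≤ t := le_trans htlb ht
    rw [gaussianReal_apply_eq_integral _ hv]
    rw [show ENNReal.ofReal δ = ENNReal.ofReal δ from rfl]
    apply ENNReal.ofReal_le_ofReal
    have hmills := mills_bound μ σ t hσ (by linarith)
    have hsq : (c - ε/(2*c))^2 ≤ t^2 := by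
      apply pow_le_pow_left₀ (by linarith) ht
    have hexp : Real.exp (-t^2/2) ≤ Real.exp (1/2) * (δ/1.25) := by
      have hexpand : (c - ε/(2*c))^2 = c^2 - ε + (ε/(2*c))^2 := by
        field_simp
        ring
      have hkey : 2 * Real.log (1.25/δ) - 1 ≤ t^2 := by
        nlinarith [sq_nonneg (ε/(2*c))]
      have : Real.exp (-t^2/2) ≤ Real.exp (1/2 - Real.log (1.25/δ)) := by
        apply Real.exp_le_exp.mpr
        linarith
      calc Real.exp (-t^2/2) ≤ Real.exp (1/2 - Real.log (1.25/δ)) := this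
        _ = Real.exp (1/2) * (δ/1.25) := by
            rw [Real.exp_sub, Real.exp_log (by positivity)]
            field_simp
    have hden : (0.75:ℝ) * 2.5066 ≤ t * Real.sqrt (2*π) := by
      apply mul_le_mul htpos num_sqrt2pi (by norm_num) (by linarith)
    calc ∫ x in Ioi (μ + σ*t), gaussianPDFReal μ (σ^2).toNNReal x
        ≤ Real.exp (-t^2/2) / (t * Real.sqrt (2*π)) := hmills
      _ ≤ (1.6488 * (δ/1.25)) / (0.75 * 2.5066) := by
          apply div_le_div₀ (by positivity) ?_ (by norm_num) hden
          calc Real.exp (-t^2/2) ≤ Real.exp (1/2) * (δ/1.25) := hexp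
            _ ≤ 1.6488 * (δ/1.25) := by
                apply mul_le_mul_of_nonneg_right num_exp_half (by positivity)
      _ = δ * (1.6488 / (1.25 * (0.75 * 2.5066))) := by ring
      _ ≤ δ * 1 := by
          apply mul_le_mul_of_nonneg_left (by norm_num) hδ0.le
      _ = δ := mul_one δ
  · -- half case
    rw [not_le] at hδA
    have htlb : (-0.091:ℝ) ≤ t := by
      have hd : (1:ℝ)/(2*c) * (2*c) = 1 := div_mul_cancel₀ _ h2c.ne'
      nlinarith
    calc gaussianReal μ (σ^2).toNNReal (Ioi (μ + σ*t))
        ≤ gaussianReal μ (σ^2).toNNReal (Ioi (μ - σ*0.091)) := by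
          apply measure_mono
          apply Ioi_subset_Ioi
          nlinarith
      _ ≤ ENNReal.ofReal (0.091 / Real.sqrt (2*π)) + 1/2 := tail_low μ σ 0.091 hσ (by norm_num)
      _ ≤ ENNReal.ofReal δ := by
          have h12 : (1/2 : ℝ≥0∞) = ENNReal.ofReal (1/2) := by
            rw [ENNReal.ofReal_div_of_pos (by norm_num)]
            norm_num
          rw [h12, ← ENNReal.ofReal_add (by positivity) (by norm_num)]
          apply ENNReal.ofReal_le_ofReal
          have hs : (0:ℝ) < Real.sqrt (2*π) := Real.sqrt_pos.mpr (by positivity)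
          have : (0.091:ℝ) / Real.sqrt (2*π) ≤ 0.091 / 2.5066 := by
            apply div_le_div_of_nonneg_left (by norm_num) (by norm_num) num_sqrt2pi
          nlinarith

/-- Gaussian mechanism large-privacy-loss event: with
`σ = (S/ε) √(2 log (1.25/δ))` and `|μ₀ - μ₁| ≤ S`, the Gaussian measure with mean
`μ₀` and variance `σ²` assigns measure at most `δ` to the event that the density
ratio exceeds `exp ε`. -/
theorem gaussian_mechanism_privacy_loss_event (ε δ S : ℝ)
    (hε0 : 0 < ε) (hε1 : ε ≤ 1) (hδ0 : 0 < δ) (hδ1 : δ < 1) (hS : 0 < S)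
    (σ : ℝ) (hσ : σ = (S / ε) * Real.sqrt (2 * Real.log (1.25 / δ)))
    (μ₀ μ₁ : ℝ) (hμ : |μ₀ - μ₁| ≤ S) :
    gaussianReal μ₀ (σ ^ 2).toNNReal
        {x : ℝ | gaussianPDFReal μ₀ (σ ^ 2).toNNReal x >
          Real.exp ε * gaussianPDFReal μ₁ (σ ^ 2).toNNReal x} ≤
      ENNReal.ofReal δ := by
  have hL : (0.22:ℝ) ≤ Real.log (1.25/δ) := by
    calc (0.22:ℝ) ≤ Real.log 1.25 := num_log_125
      _ ≤ Real.log (1.25/δ) := by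
          apply Real.log_le_log (by norm_num)
          rw [le_div_iff₀ hδ0]; nlinarith
  set c : ℝ := Real.sqrt (2 * Real.log (1.25/δ)) with hc
  have hc0 : 0 ≤ c := Real.sqrt_nonneg _
  have hc2 : c^2 = 2 * Real.log (1.25/δ) := Real.sq_sqrt (by linarith)
  have hcpos : 0 < c := by nlinarith
  have hσpos : 0 < σ := by
    rw [hσ]
    exact mul_pos (div_pos hS hε0) hcpos
  have hcoe : (((σ^2).toNNReal : ℝ≥0) : ℝ) = σ^2 := Real.coe_toNNReal _ (sq_nonneg σ)
  have hcS : σ * ε / S = c := by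
    rw [hσ]; field_simp
  have key : ∀ x : ℝ, (gaussianPDFReal μ₀ (σ^2).toNNReal x >
      Real.exp ε * gaussianPDFReal μ₁ (σ^2).toNNReal x) ↔
      2*σ^2*ε < (x - μ₁)^2 - (x - μ₀)^2 := by
    intro x
    simp only [gaussianPDFReal, hcoe]
    have hK : (0:ℝ) < (Real.sqrt (2*π*σ^2))⁻¹ := by positivity
    rw [gt_iff_lt, show Real.exp ε * ((Real.sqrt (2*π*σ^2))⁻¹ *
        Real.exp (-(x-μ₁)^2/(2*σ^2))) = (Real.sqrt (2*π*σ^2))⁻¹ *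
        Real.exp (ε + -(x-μ₁)^2/(2*σ^2)) from by rw [Real.exp_add]; ring]
    rw [mul_lt_mul_iff_right₀ hK, Real.exp_lt_exp]
    have h2σ : (0:ℝ) < 2*σ^2 := by positivity
    rw [show ε + -(x-μ₁)^2/(2*σ^2) = (2*σ^2*ε + -(x-μ₁)^2)/(2*σ^2) from by
      field_simp]
    rw [div_lt_div_iff_of_pos_right h2σ]
    constructor <;> intro h <;> linarith
  rcases lt_trichotomy (μ₀ - μ₁) 0 with hΔ | hΔ | hΔ
  · -- μ₀ < μ₁ : event is Iio
    set D : ℝ := μ₁ - μ₀ with hD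
    have hDpos : 0 < D := by simp only [hD]; linarith
    have hDS : D ≤ S := by
      have := abs_le.mp hμ
      simp only [hD]; linarith [this.1]
    set t : ℝ := σ*ε/D - D/(2*σ) with htdef
    have hE : {x : ℝ | gaussianPDFReal μ₀ (σ^2).toNNReal x >
        Real.exp ε * gaussianPDFReal μ₁ (σ^2).toNNReal x} = Iio (μ₀ - σ*t) := by
      ext x
      simp only [mem_setOf_eq, mem_Iio, key x]
      have hst : 2*D*(σ*t) = 2*σ^2*ε - D^2 := by
        rw [htdef]; field_simp
      have hid : (x - μ₁)^2 - (x - μ₀)^2 = -2*D*(x-μ₀) + D^2 := by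
        have : μ₁ = μ₀ + D := by rw [hD]; ring
        rw [this]; ring
      rw [hid]
      constructor <;> intro h <;> nlinarith
    rw [hE, gauss_reflect μ₀ (μ₀ - σ*t) _]
    rw [show -(μ₀ - σ*t) = -μ₀ + σ*t by ring]
    apply tail_main (-μ₀) σ c t ε δ hε0 hε1 hδ0 hδ1 hσpos hc0 hc2
    · -- c - ε/(2c) ≤ t
      rw [htdef]
      have h1 : c ≤ σ*ε/D := by
        rw [← hcS]
        apply div_le_div_of_nonneg_left (by positivity) hDpos hDS
      have h2 : D/(2*σ) ≤ ε/(2*c) := by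
        rw [show ε/(2*c) = S/(2*σ) from by
          rw [hσ]; field_simp [hcpos.ne', hε0.ne', hS.ne']]
        gcongr
      linarith
  · -- equal means : event empty
    have hE : {x : ℝ | gaussianPDFReal μ₀ (σ^2).toNNReal x >
        Real.exp ε * gaussianPDFReal μ₁ (σ^2).toNNReal x} = ∅ := by
      ext x
      simp only [mem_setOf_eq, mem_empty_iff_false, iff_false, not_lt, key x, not_lt]
      have : μ₁ = μ₀ := by linarith
      rw [this]
      nlinarith
    rw [hE]
    simp
  · -- μ₀ > μ₁ : event is Ioi
    set D : ℝ := μ₀ - μ₁ with hD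
    have hDpos : 0 < D := hΔ
    have hDS : D ≤ S := by
      have := abs_le.mp hμ
      simp only [hD]; linarith [this.2]
    set t : ℝ := σ*ε/D - D/(2*σ) with htdef
    have hE : {x : ℝ | gaussianPDFReal μ₀ (σ^2).toNNReal x >
        Real.exp ε * gaussianPDFReal μ₁ (σ^2).toNNReal x} = Ioi (μ₀ + σ*t) := by
      ext x
      simp only [mem_setOf_eq, mem_Ioi, key x]
      have hst : 2*D*(σ*t) = 2*σ^2*ε - D^2 := by
        rw [htdef]; field_simp
      have hid : (x - μ₁)^2 - (x - μ₀)^2 = 2*D*(x-μ₀) + D^2 := by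
        have : μ₁ = μ₀ - D := by rw [hD]; ring
        rw [this]; ring
      rw [hid]
      constructor <;> intro h <;> nlinarith
    rw [hE]
    apply tail_main μ₀ σ c t ε δ hε0 hε1 hδ0 hδ1 hσpos hc0 hc2
    rw [htdef]
    have h1 : c ≤ σ*ε/D := by
      rw [← hcS]
      apply div_le_div_of_nonneg_left (by positivity) hDpos hDS
    have h2 : D/(2*σ) ≤ ε/(2*c) := by
      rw [show ε/(2*c) = S/(2*σ) from by
        rw [hσ]; field_simp [hcpos.ne', hε0.ne', hS.ne']]
      gcongr
    linarith
end
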